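/- Kolmogorov's double-negation translation is sound for classical propositional logic: define A^k recursively by (atom p)^k = ¬¬(atom p), ⊥^k = ¬¬⊥, (A → B)^k = ¬¬(A^k → B^k), (A ∧ B)^k = ¬¬(A^k ∧ B^k), (A ∨ B)^k = ¬¬(A^k ∨ B^k). Then for any propositional formula A, if A is provable classically then A^k is provable intuitionistically. -/

import Mathlib

/-!
Translate a classical derivation of `Γ ⊢ A` rule by rule into an intuitionistic derivation of
`Γᵏ ⊢ Aᵏ`. Introduction rules just add a double negation. Every `Cᵏ` is a negation, hence stable
(`¬¬¬P ⊢ ¬P`), so an elimination rule may be applied underneath the double negation of its major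
premise. Finally `⊥ᵏ = ¬¬⊥` is intuitionistically equivalent to `⊥`, which handles ex falso and
double negation elimination.
-/

inductive Form (α : Type) : Type
  | atom : α → Form α
  | bot : Form α
  | imp : Form α → Form α → Form α
  | and : Form α → Form α → Form α
  | or : Form α → Form α → Form α

def Form.neg {α : Type} (A : Form α) : Form α := Form.imp A Form.bot

/-- Natural deduction provability; `cl = true` additionally allows
double negation elimination (classical logic). -/
inductive Prov {α : Type} (cl : Bool) : List (Form α) → Form α → Prop
  | ax {Γ A} : A ∈ Γ → Prov cl Γ A
  | impI {Γ A B} : Prov cl (A :: Γ) B → Prov cl Γ (Form.imp A B)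
  | impE {Γ A B} : Prov cl Γ (Form.imp A B) → Prov cl Γ A → Prov cl Γ B
  | andI {Γ A B} : Prov cl Γ A → Prov cl Γ B → Prov cl Γ (Form.and A B)
  | andE1 {Γ A B} : Prov cl Γ (Form.and A B) → Prov cl Γ A
  | andE2 {Γ A B} : Prov cl Γ (Form.and A B) → Prov cl Γ B
  | orI1 {Γ A B} : Prov cl Γ A → Prov cl Γ (Form.or A B)
  | orI2 {Γ A B} : Prov cl Γ B → Prov cl Γ (Form.or A B)
  | orE {Γ A B C} : Prov cl Γ (Form.or A B) → Prov cl (A :: Γ) C →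
      Prov cl (B :: Γ) C → Prov cl Γ C
  | botE {Γ A} : Prov cl Γ Form.bot → Prov cl Γ A
  | dne {Γ A} : cl = true → Prov cl Γ (Form.neg (Form.neg A)) → Prov cl Γ A

def kolm {α : Type} : Form α → Form α
  | Form.atom a => Form.neg (Form.neg (Form.atom a))
  | Form.bot => Form.neg (Form.neg Form.bot)
  | Form.imp A B => Form.neg (Form.neg (Form.imp (kolm A) (kolm B)))
  | Form.and A B => Form.neg (Form.neg (Form.and (kolm A) (kolm B)))
  | Form.or A B => Form.neg (Form.neg (Form.or (kolm A) (kolm B)))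

namespace Prov

variable {α : Type} {cl : Bool} {Γ Δ : List (Form α)} {A B C P Q : Form α}

theorem weaken (h : Prov cl Γ A) (hsub : Γ ⊆ Δ) : Prov cl Δ A := by
  induction h generalizing Δ with
  | ax hmem => exact ax (hsub hmem)
  | impI _ ih => exact impI (ih (List.cons_subset_cons _ hsub))
  | impE _ _ ih₁ ih₂ => exact impE (ih₁ hsub) (ih₂ hsub)
  | andI _ _ ih₁ ih₂ => exact andI (ih₁ hsub) (ih₂ hsub)
  | andE1 _ ih => exact andE1 (ih hsub)
  | andE2 _ ih => exact andE2 (ih hsub)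
  | orI1 _ ih => exact orI1 (ih hsub)
  | orI2 _ ih => exact orI2 (ih hsub)
  | orE _ _ _ ih ih₁ ih₂ =>
      exact orE (ih hsub) (ih₁ (List.cons_subset_cons _ hsub)) (ih₂ (List.cons_subset_cons _ hsub))
  | botE _ ih => exact botE (ih hsub)
  | dne hcl _ ih => exact dne hcl (ih hsub)

theorem weaken_cons (h : Prov cl Γ A) : Prov cl (B :: Γ) A :=
  h.weaken (List.subset_cons_self _ _)

theorem weaken_cons_cons (h : Prov cl (A :: Γ) C) : Prov cl (A :: B :: Γ) C :=
  h.weaken (List.cons_subset_cons _ (List.subset_cons_self _ _))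

theorem neg_neg_intro (h : Prov cl Γ A) : Prov cl Γ A.neg.neg :=
  impI (impE (ax List.mem_cons_self) h.weaken_cons)

theorem neg_neg_map (h : Prov cl Γ P.neg.neg) (hPQ : Prov cl (P :: Γ) Q) :
    Prov cl Γ Q.neg.neg :=
  impI <| impE h.weaken_cons <| impI <|
    impE (ax (List.mem_cons_of_mem _ List.mem_cons_self)) hPQ.weaken_cons_cons

theorem neg_of_neg_neg_neg (h : Prov cl Γ A.neg.neg.neg) : Prov cl Γ A.neg :=
  impI (impE h.weaken_cons (neg_neg_intro (ax List.mem_cons_self)))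

theorem bot_of_neg_neg_bot (h : Prov cl Γ Form.bot.neg.neg) : Prov cl Γ Form.bot :=
  impE h (impI (ax List.mem_cons_self))

theorem kolm_of_neg_neg (h : Prov cl Γ (kolm C).neg.neg) : Prov cl Γ (kolm C) := by
  cases C <;> exact neg_of_neg_neg_neg h

theorem kolm_of_neg_neg_of_cons (h : Prov cl Γ P.neg.neg) (hP : Prov cl (P :: Γ) (kolm C)) :
    Prov cl Γ (kolm C) :=
  kolm_of_neg_neg (neg_neg_map h hP)

theorem kolm_neg_of_neg_kolm (h : Prov cl Γ (kolm A).neg) : Prov cl Γ (kolm A.neg) :=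
  neg_neg_intro (impI (botE (impE h.weaken_cons (ax List.mem_cons_self))))

theorem kolm_of_kolm_neg_neg (h : Prov cl Γ (kolm A.neg.neg)) : Prov cl Γ (kolm A) :=
  kolm_of_neg_neg_of_cons h <| kolm_of_neg_neg <| impI <| bot_of_neg_neg_bot <|
    impE (ax (List.mem_cons_of_mem _ List.mem_cons_self))
      (kolm_neg_of_neg_kolm (ax List.mem_cons_self))

theorem map_kolm (h : Prov true Γ A) : Prov false (Γ.map kolm) (kolm A) := by
  induction h with
  | ax hmem => exact ax (List.mem_map_of_mem hmem)
  | impI _ ih => exact neg_neg_intro (impI ih)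
  | impE _ _ ih₁ ih₂ =>
      exact kolm_of_neg_neg_of_cons ih₁ (impE (ax List.mem_cons_self) ih₂.weaken_cons)
  | andI _ _ ih₁ ih₂ => exact neg_neg_intro (andI ih₁ ih₂)
  | andE1 _ ih => exact kolm_of_neg_neg_of_cons ih (andE1 (ax List.mem_cons_self))
  | andE2 _ ih => exact kolm_of_neg_neg_of_cons ih (andE2 (ax List.mem_cons_self))
  | orI1 _ ih => exact neg_neg_intro (orI1 ih)
  | orI2 _ ih => exact neg_neg_intro (orI2 ih)
  | orE _ _ _ ih ih₁ ih₂ =>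
      exact kolm_of_neg_neg_of_cons ih
        (orE (ax List.mem_cons_self) ih₁.weaken_cons_cons ih₂.weaken_cons_cons)
  | botE _ ih => exact botE (bot_of_neg_neg_bot ih)
  | dne _ _ ih => exact kolm_of_kolm_neg_neg ih

end Prov

theorem kolmogorov_sound {α : Type} (A : Form α) :
    Prov true ([] : List (Form α)) A → Prov false ([] : List (Form α)) (kolm A) :=
  Prov.map_kolm
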